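/- arXiv:2009.13837 — 3 statements merged into one kernel-verified Lean document; each statement's English description precedes it below -/
import Mathlib

section
/- Let N ≥ 2 be an integer and let β ∈ M₂(ℤ) with gcd(det β, N) = 1. If for every row vector v ∈ (1/N)·M_{1,2}(ℤ) \ M_{1,2}(ℤ) we have vβ ≡ v (mod M_{1,2}(ℤ)) or vβ ≡ −v (mod M_{1,2}(ℤ)), then β ≡ I₂ (mod N·M₂(ℤ)) or β ≡ −I₂ (mod N·M₂(ℤ)). -/
/-- Lemma 5.3 (Lemma `betaI`): if `β ∈ M₂(ℤ)` with `gcd(det β, N) = 1` and every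
row vector `v ∈ (1/N)M_{1,2}(ℤ) \ M_{1,2}(ℤ)` (represented by an integer vector `w`
with not all entries divisible by `N`, via `v = w/N`) satisfies
`vβ ≡ ±v (mod M_{1,2}(ℤ))`, then `β ≡ ±I₂ (mod N·M₂(ℤ))`. -/
theorem stmt0 (N : ℕ) (hN : 2 ≤ N) (β : Matrix (Fin 2) (Fin 2) ℤ)
    (hdet : Int.gcd β.det (N : ℤ) = 1)
    (hv : ∀ w : Fin 2 → ℤ, ¬ (∀ i, (N : ℤ) ∣ w i) →
      (∀ i, (N : ℤ) ∣ (Matrix.vecMul w β - w) i) ∨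
      (∀ i, (N : ℤ) ∣ (Matrix.vecMul w β + w) i)) :
    (∀ i j, (N : ℤ) ∣ (β - 1) i j) ∨ (∀ i j, (N : ℤ) ∣ (β + 1) i j) := by
  have hN1 : ¬ (N : ℤ) ∣ 1 := by
    intro h; have := Int.le_of_dvd one_pos h; omega
  have h0 := hv ![1,0] (by intro h; exact hN1 (by simpa using h 0))
  have h1 := hv ![0,1] (by intro h; exact hN1 (by simpa using h 1))
  have hs := hv ![1,1] (by intro h; exact hN1 (by simpa using h 0))
  simp only [Fin.forall_fin_two, Pi.sub_apply, Pi.add_apply, Matrix.vecMul,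
    dotProduct, Fin.sum_univ_two, Matrix.cons_val_zero, Matrix.cons_val_one,
    Matrix.head_cons, one_mul, zero_mul, add_zero, zero_add, sub_zero] at h0 h1 hs
  have key : ∀ x : ℤ, (N : ℤ) ∣ x ↔ ((x : ZMod N) = 0) :=
    fun x => (ZMod.intCast_zmod_eq_zero_iff_dvd x N).symm
  have goal : ((β 0 0 - 1 : ℤ) : ZMod N) = 0 ∧ ((β 0 1 : ℤ) : ZMod N) = 0 ∧
      ((β 1 0 : ℤ) : ZMod N) = 0 ∧ ((β 1 1 - 1 : ℤ) : ZMod N) = 0 ∨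
      ((β 0 0 + 1 : ℤ) : ZMod N) = 0 ∧ ((β 0 1 : ℤ) : ZMod N) = 0 ∧
      ((β 1 0 : ℤ) : ZMod N) = 0 ∧ ((β 1 1 + 1 : ℤ) : ZMod N) = 0 := by
    rcases h0 with ⟨ha, hb⟩ | ⟨ha, hb⟩ <;> rcases h1 with ⟨hc, hd⟩ | ⟨hc, hd⟩ <;>
      rw [key] at ha hb hc hd <;>
      [skip; skip; skip; skip] <;>
      push_cast at ha hb hc hd
    · exact Or.inl ⟨by push_cast; linear_combination ha, by push_cast; linear_combination hb,
        by push_cast; linear_combination hc, by push_cast; linear_combination hd⟩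
    · -- row0 ≡ +, row1 ≡ −
      have h2 : (2 : ZMod N) = 0 := by
        rcases hs with ⟨hs0, hs1⟩ | ⟨hs0, hs1⟩ <;> rw [key] at hs0 hs1 <;> push_cast at hs0 hs1
        · linear_combination hb + hd - hs1
        · linear_combination hs0 - ha - hc
      exact Or.inl ⟨by push_cast; linear_combination ha, by push_cast; linear_combination hb,
        by push_cast; linear_combination hc, by push_cast; linear_combination hd - h2⟩
    · -- row0 ≡ −, row1 ≡ +
      have h2 : (2 : ZMod N) = 0 := by
        rcases hs with ⟨hs0, hs1⟩ | ⟨hs0, hs1⟩ <;> rw [key] at hs0 hs1 <;> push_cast at hs0 hs1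
        · linear_combination ha + hc - hs0
        · linear_combination hs1 - hb - hd
      exact Or.inr ⟨by push_cast; linear_combination ha, by push_cast; linear_combination hb,
        by push_cast; linear_combination hc, by push_cast; linear_combination hd + h2⟩
    · exact Or.inr ⟨by push_cast; linear_combination ha, by push_cast; linear_combination hb,
        by push_cast; linear_combination hc, by push_cast; linear_combination hd⟩
  rcases goal with ⟨g1, g2, g3, g4⟩ | ⟨g1, g2, g3, g4⟩
  · left; intro i j
    fin_cases i <;> fin_cases j <;>
      norm_num [Matrix.sub_apply, Matrix.one_apply] <;>
      [exact (key _).mpr g1; exact (key _).mpr g2; exact (key _).mpr g3; exact (key _).mpr g4]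
  · right; intro i j
    fin_cases i <;> fin_cases j <;>
      norm_num [Matrix.add_apply, Matrix.one_apply] <;>
      [exact (key _).mpr g1; exact (key _).mpr g2; exact (key _).mpr g3; exact (key _).mpr g4]
end

section
/- Let p be an odd prime and n ≥ 1, and let b_K, c_K ∈ ℤ with d_K := b_K² − 4c_K. Suppose γ = [[t − b_K s, −c_K s],[s, t]] ∈ GL₂(ℤ/pⁿℤ) satisfies γ² = I₂, γ ≠ I₂, and 2t − b_K s ≡ 0 (mod p). Then p ∤ d_K and d_K is a quadratic residue modulo p (indeed d_K s² ≡ 4 (mod p)). -/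
/-! The `(1,1)` entry of `γ² = 1` is the norm equation `t² - c s² = 1`. Reducing mod `p` and
substituting `2t = b s` gives `(b² - 4c) s² = 4`, which is a unit since `p` is odd; hence
`b² - 4c ≠ 0` and `b² - 4c = (2/s)²` in `ZMod p`. -/

section CommRing

variable {R : Type*} [CommRing R]

theorem norm_eq_one_of_cartan_mul_self_eq_one {b c s t : R}
    (h : !![t - b * s, -(c * s); s, t] * !![t - b * s, -(c * s); s, t] = 1) :
    t ^ 2 - c * s ^ 2 = 1 := by
  have h11 := congrFun (congrFun h 1) 1
  simp only [Matrix.mul_apply, Fin.sum_univ_two, Matrix.one_apply_eq, Matrix.of_apply,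
    Matrix.cons_val', Matrix.cons_val_zero, Matrix.cons_val_one, Matrix.empty_val',
    Matrix.cons_val_fin_one] at h11
  linear_combination h11

theorem discr_mul_sq_eq_four_of_trace_eq_zero {b c s t : R}
    (htr : 2 * t - b * s = 0) (hnorm : t ^ 2 - c * s ^ 2 = 1) :
    (b ^ 2 - 4 * c) * s ^ 2 = 4 := by
  linear_combination (-(b * s + 2 * t)) * htr + 4 * hnorm

end CommRing

theorem ne_zero_and_isSquare_of_mul_sq_eq_four {F : Type*} [Field F] (h2 : (2 : F) ≠ 0)
    {d s : F} (h : d * s ^ 2 = 4) : d ≠ 0 ∧ IsSquare d := by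
  have h4 : (4 : F) ≠ 0 := by
    simpa [show (4 : F) = 2 * 2 by norm_num] using mul_ne_zero h2 h2
  obtain ⟨hd, hs2⟩ := mul_ne_zero_iff.mp (h ▸ h4 : d * s ^ 2 ≠ 0)
  have hs : s ≠ 0 := ne_zero_pow two_ne_zero hs2
  refine ⟨hd, 2 / s, ?_⟩
  field_simp
  linear_combination h

theorem stmt4_general (p : ℕ) (hp : p.Prime) (hodd : p ≠ 2) (n : ℕ) (hn : 0 < n) (bK cK : ℤ)
    (s t : ZMod (p ^ n)) (γ : Matrix (Fin 2) (Fin 2) (ZMod (p ^ n)))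
    (hγ : γ = !![t - (bK : ZMod (p ^ n)) * s, -((cK : ZMod (p ^ n)) * s); s, t])
    (hsq : γ * γ = 1)
    (htr : (ZMod.castHom (dvd_pow_self p hn.ne') (ZMod p))
      (2 * t - (bK : ZMod (p ^ n)) * s) = 0) :
    ¬ (p : ℤ) ∣ (bK ^ 2 - 4 * cK) ∧
      ((bK ^ 2 - 4 * cK : ℤ) : ZMod p) *
        ((ZMod.castHom (dvd_pow_self p hn.ne') (ZMod p)) s) ^ 2 = 4 ∧
      IsSquare ((bK ^ 2 - 4 * cK : ℤ) : ZMod p) := by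
  have : Fact p.Prime := ⟨hp⟩
  subst hγ
  set f := ZMod.castHom (dvd_pow_self p hn.ne') (ZMod p)
  have hnorm := congrArg f (norm_eq_one_of_cartan_mul_self_eq_one hsq)
  simp only [map_sub, map_mul, map_pow, map_intCast, map_one] at hnorm
  simp only [map_sub, map_mul, map_ofNat, map_intCast] at htr
  have key : ((bK ^ 2 - 4 * cK : ℤ) : ZMod p) * f s ^ 2 = 4 := by
    push_cast
    exact discr_mul_sq_eq_four_of_trace_eq_zero htr hnorm
  have h2 : (2 : ZMod p) ≠ 0 := Ring.two_ne_zero (by rwa [ZMod.ringChar_zmod_n])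
  obtain ⟨hd, hsquare⟩ := ne_zero_and_isSquare_of_mul_sq_eq_four h2 key
  exact ⟨fun h => hd ((ZMod.intCast_zmod_eq_zero_iff_dvd _ _).mpr h), key, hsquare⟩

/-- Case 2 in the proof of Lemma 7.2: if an order-2 element
`γ = [[t - b_K s, -c_K s],[s, t]]` of the Cartan subgroup of `GL₂(ℤ/pⁿℤ)`
(`p` an odd prime) has trace `2t - b_K s` divisible by `p`, then `p ∤ d_K` and
`d_K` is a quadratic residue mod `p`; indeed `d_K s² ≡ 4 (mod p)`. -/
theorem stmt4 (p : ℕ) (hp : p.Prime) (hodd : p ≠ 2) (n : ℕ) (hn : 0 < n) (bK cK : ℤ)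
    (s t : ZMod (p ^ n)) (γ : Matrix (Fin 2) (Fin 2) (ZMod (p ^ n)))
    (hγ : γ = !![t - (bK : ZMod (p ^ n)) * s, -((cK : ZMod (p ^ n)) * s); s, t])
    (hunit : IsUnit γ) (hsq : γ * γ = 1) (hne : γ ≠ 1)
    (htr : (ZMod.castHom (dvd_pow_self p hn.ne') (ZMod p))
      (2 * t - (bK : ZMod (p ^ n)) * s) = 0) :
    ¬ (p : ℤ) ∣ (bK ^ 2 - 4 * cK) ∧
      ((bK ^ 2 - 4 * cK : ℤ) : ZMod p) *
        ((ZMod.castHom (dvd_pow_self p hn.ne') (ZMod p)) s) ^ 2 = 4 ∧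
      IsSquare ((bK ^ 2 - 4 * cK : ℤ) : ZMod p) :=
  stmt4_general p hp hodd n hn bK cK s t γ hγ hsq htr
end

section
/- Let p be an odd prime with either p | d_K and p ≡ 1 (mod 4), or d_K a quadratic nonresidue mod p (where d_K = b_K² − 4c_K is the discriminant of an imaginary quadratic field). Then every element γ of order 2 in the Cartan subgroup W_{K,pⁿ} = { [[t − b_K s, −c_K s],[s,t]] invertible : s,t ∈ ℤ/pⁿℤ } of GL₂(ℤ/pⁿℤ) equals −I₂. -/
lemma zmod_unit_or_cast_zero (p : ℕ) (hp : p.Prime) (n : ℕ) (hn : 0 < n)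
    (x : ZMod (p ^ n)) :
    IsUnit x ∨ (ZMod.castHom (dvd_pow_self p hn.ne') (ZMod p)) x = 0 := by
  haveI : NeZero (p ^ n) := ⟨pow_ne_zero _ hp.pos.ne'⟩
  rcases (Nat.coprime_or_dvd_of_prime hp x.val) with h | h
  · left
    have : IsUnit ((x.val : ℕ) : ZMod (p ^ n)) :=
      (ZMod.isUnit_iff_coprime x.val (p ^ n)).mpr (h.symm.pow_right n)
    rwa [ZMod.natCast_rightInverse x] at this
  · right
    have hx : ((x.val : ℕ) : ZMod (p ^ n)) = x := ZMod.natCast_rightInverse x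
    rw [← hx, map_natCast]
    exact (ZMod.natCast_eq_zero_iff x.val p).mpr h

lemma zmod_sq_eq_one (p : ℕ) (hp : p.Prime) (hodd : p ≠ 2) (n : ℕ) (hn : 0 < n)
    (u : ZMod (p ^ n)) (h : u * u = 1) : u = 1 ∨ u = -1 := by
  have hmul : (u - 1) * (u + 1) = 0 := by linear_combination h
  rcases zmod_unit_or_cast_zero p hp n hn (u - 1) with h1 | h1
  · right
    have := (IsUnit.mul_right_eq_zero h1).mp hmul
    linear_combination this
  · rcases zmod_unit_or_cast_zero p hp n hn (u + 1) with h2 | h2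
    · left
      have hmul' : (u + 1) * (u - 1) = 0 := by linear_combination hmul
      have := (IsUnit.mul_right_eq_zero h2).mp hmul'
      linear_combination this
    · exfalso
      have h20 : (2 : ZMod p) = 0 := by
        have := congrArg (ZMod.castHom (dvd_pow_self p hn.ne') (ZMod p))
          (show (u + 1) - (u - 1) = 2 by ring)
        rw [map_sub, h1, h2] at this
        simpa [map_ofNat] using this.symm
      have : (p : ℕ) ∣ 2 :=
        (ZMod.natCast_eq_zero_iff 2 p).mp (by exact_mod_cast h20)
      exact hodd ((Nat.prime_dvd_prime_iff_eq hp Nat.prime_two).mp this)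

/-- Lemma 7.2 (core computation): let `p` be an odd prime with either `p ∣ d_K` and
`p ≡ 1 (mod 4)`, or `d_K` a quadratic nonresidue mod `p`, where `d_K = b_K² - 4c_K < 0`
is the discriminant of an imaginary quadratic field. Then every element of order 2 of
the Cartan subgroup `W_{K,pⁿ} = {[[t - b_K s, -c_K s],[s,t]]}` of `GL₂(ℤ/pⁿℤ)`
equals `-I₂`. -/
theorem stmt5 (p : ℕ) (hp : p.Prime) (hodd : p ≠ 2) (n : ℕ) (hn : 0 < n) (bK cK : ℤ)
    (hdneg : bK ^ 2 - 4 * cK < 0)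
    (hd4 : (bK ^ 2 - 4 * cK) % 4 = 0 ∨ (bK ^ 2 - 4 * cK) % 4 = 1)
    (hsplit : ((p : ℤ) ∣ (bK ^ 2 - 4 * cK) ∧ p % 4 = 1) ∨
      ¬ IsSquare ((bK ^ 2 - 4 * cK : ℤ) : ZMod p)) :
    ∀ s t : ZMod (p ^ n),
      ∀ γ : Matrix (Fin 2) (Fin 2) (ZMod (p ^ n)),
        γ = !![t - (bK : ZMod (p ^ n)) * s, -((cK : ZMod (p ^ n)) * s); s, t] →
        IsUnit γ → γ * γ = 1 → γ ≠ 1 → γ = -1 := by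
  intro s t γ hγ hunit hsq hne
  haveI : Fact p.Prime := ⟨hp⟩
  subst hγ
  have hdet2 : ((t - (bK : ZMod (p ^ n)) * s) * t - -((cK : ZMod (p ^ n)) * s) * s) *
      ((t - (bK : ZMod (p ^ n)) * s) * t - -((cK : ZMod (p ^ n)) * s) * s) = 1 := by
    have h1 := congrArg Matrix.det hsq
    rwa [Matrix.det_mul, Matrix.det_fin_two_of, Matrix.det_one] at h1
  rw [Matrix.mul_fin_two] at hsq
  have e10 : s * (t - (bK : ZMod (p ^ n)) * s) + t * s = 0 := by
    have := congrFun (congrFun hsq 1) 0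
    simpa [Matrix.one_apply] using this
  have e11 : s * -((cK : ZMod (p ^ n)) * s) + t * t = 1 := by
    have := congrFun (congrFun hsq 1) 1
    simpa [Matrix.one_apply] using this
  rcases zmod_sq_eq_one p hp hodd n hn _ hdet2 with hdet | hdet
  · -- det = 1 : show s = 0
    have h2u : IsUnit (2 : ZMod (p ^ n)) := by
      have : IsUnit ((2 : ℕ) : ZMod (p ^ n)) := (ZMod.isUnit_iff_coprime 2 (p ^ n)).mpr
        (((Nat.coprime_primes Nat.prime_two hp).mpr (Ne.symm hodd)).pow_right n)
      simpa using this
    have htrt : (2 * t - (bK : ZMod (p ^ n)) * s) * t = 2 := by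
      linear_combination hdet + e11
    have htru : IsUnit (2 * t - (bK : ZMod (p ^ n)) * s) := by
      refine isUnit_of_mul_isUnit_left (y := t) ?_
      rw [htrt]; exact h2u
    have hs : s = 0 := by
      have h0 : (2 * t - (bK : ZMod (p ^ n)) * s) * s = 0 := by linear_combination e10
      exact (IsUnit.mul_right_eq_zero htru).mp h0
    subst hs
    have ht2 : t * t = 1 := by linear_combination e11
    rcases zmod_sq_eq_one p hp hodd n hn t ht2 with ht | ht
    · subst ht
      exact absurd (by ext i j; fin_cases i <;> fin_cases j <;>
        simp [Matrix.one_apply]) hne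
    · subst ht
      ext i j; fin_cases i <;> fin_cases j <;>
        simp [Matrix.one_apply]
  · -- det = -1 : contradiction
    exfalso
    have key : ((bK ^ 2 - 4 * cK : ℤ) : ZMod (p ^ n)) * s ^ 2 = 4 := by
      push_cast
      linear_combination (-2 : ZMod (p ^ n)) * hdet - (bK : ZMod (p ^ n)) * e10 + 2 * e11
    have key' : ((bK ^ 2 - 4 * cK : ℤ) : ZMod p) *
        ((ZMod.castHom (dvd_pow_self p hn.ne') (ZMod p)) s) ^ 2 = 4 := by
      have := congrArg (ZMod.castHom (dvd_pow_self p hn.ne') (ZMod p)) key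
      rw [map_mul, map_pow, map_intCast, map_ofNat] at this
      exact this
    have h4 : (4 : ZMod p) ≠ 0 := by
      intro h40
      have hd : (p : ℕ) ∣ 4 :=
        (ZMod.natCast_eq_zero_iff 4 p).mp (by exact_mod_cast h40)
      have : (p : ℕ) ∣ 2 := hp.dvd_of_dvd_pow (show p ∣ 2 ^ 2 by norm_num; exact hd)
      exact hodd ((Nat.prime_dvd_prime_iff_eq hp Nat.prime_two).mp this)
    rcases hsplit with ⟨hdvd, _⟩ | hns
    · have : ((bK ^ 2 - 4 * cK : ℤ) : ZMod p) = 0 :=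
        (ZMod.intCast_zmod_eq_zero_iff_dvd _ p).mpr hdvd
      rw [this, zero_mul] at key'
      exact h4 key'.symm
    · apply hns
      set fs := (ZMod.castHom (dvd_pow_self p hn.ne') (ZMod p)) s with hfs
      have hsne : fs ≠ 0 := by
        intro h0
        rw [h0] at key'
        simp at key'
        exact h4 key'.symm
      have hinv : fs * fs⁻¹ = 1 := mul_inv_cancel₀ hsne
      refine ⟨2 * fs⁻¹, ?_⟩
      linear_combination (fs⁻¹) ^ 2 * key' -
        ((bK ^ 2 - 4 * cK : ℤ) : ZMod p) * (fs * fs⁻¹ + 1) * hinv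
end
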